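/- arXiv:1903.06578 — 6 statements merged into one kernel-verified Lean document; each statement's English description precedes it below -/
import Mathlib

section
/- Let J be an m×m complex matrix and let B be the 2m×2m complex block matrix B = fromBlocks 0 J Jᵀ 0 (zero diagonal blocks, top-right block J, bottom-left block Jᵀ). Then the characteristic polynomial of B·Bᴴ equals the square of the characteristic polynomial of J·Jᴴ. Consequently every eigenvalue of B·Bᴴ — i.e. every squared singular value of B, and hence every squeezing eigenvalue of a twin-beam Gaussian transformation — occurs with even multiplicity, in particular with multiplicity at least two. -/
/-! `B * Bᴴ` is block diagonal with blocks `J * Jᴴ` and `Jᵀ * Jᵀᴴ = (Jᴴ * J)ᵀ`; transposing and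
commuting the factors (`charpoly (X * Y) = charpoly (Y * X)`) shows both blocks have the
characteristic polynomial of `J * Jᴴ`, and a square has roots of even multiplicity. -/

open Matrix Polynomial

section

variable {R : Type*} [CommRing R] [StarRing R] {m n : Type*}
  [Fintype m] [Fintype n] [DecidableEq m] [DecidableEq n]

theorem Matrix.charpoly_fromBlocks_zero_mul_conjTranspose (A : Matrix m n R) (C : Matrix n m R) :
    (fromBlocks 0 A C 0 * (fromBlocks 0 A C 0)ᴴ).charpoly =
      (A * Aᴴ).charpoly * (C * Cᴴ).charpoly := by
  simp [fromBlocks_conjTranspose, fromBlocks_multiply]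

theorem Matrix.charpoly_transpose_mul_transpose_conjTranspose (J : Matrix n n R) :
    (Jᵀ * Jᵀᴴ).charpoly = (J * Jᴴ).charpoly := by
  rw [conjTranspose_transpose_eq_transpose_conjTranspose, ← transpose_mul, charpoly_transpose,
    charpoly_mul_comm]

end

theorem Polynomial.even_rootMultiplicity_sq {R : Type*} [CommRing R] [IsDomain R]
    {p : R[X]} (hp : p ≠ 0) (a : R) : Even ((p ^ 2).rootMultiplicity a) := by
  rw [sq, rootMultiplicity_mul (mul_ne_zero hp hp)]
  exact ⟨_, rfl⟩

/-- For the twin-beam block matrix `B = fromBlocks 0 J Jᵀ 0`, the characteristic polynomial of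
`B * Bᴴ` is the square of that of `J * Jᴴ`; consequently every eigenvalue of `B * Bᴴ`
(every squared singular value of `B`) has even root multiplicity, in particular at least two. -/
theorem twin_beam_charpoly_sq (m : ℕ) (J : Matrix (Fin m) (Fin m) ℂ)
    (B : Matrix (Fin m ⊕ Fin m) (Fin m ⊕ Fin m) ℂ)
    (hB : B = Matrix.fromBlocks 0 J Jᵀ 0) :
    (B * Bᴴ).charpoly = ((J * Jᴴ).charpoly) ^ 2 ∧
      ∀ μ : ℂ, Even ((B * Bᴴ).charpoly.rootMultiplicity μ) := by
  have hcharpoly : (B * Bᴴ).charpoly = ((J * Jᴴ).charpoly) ^ 2 := by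
    rw [hB, charpoly_fromBlocks_zero_mul_conjTranspose,
      charpoly_transpose_mul_transpose_conjTranspose, sq]
  exact ⟨hcharpoly, hcharpoly ▸ even_rootMultiplicity_sq (charpoly_monic _).ne_zero⟩
end

section
/- Let J, C, D be m×m complex matrices with C and D unitary, let R be an m×m diagonal matrix with real nonnegative diagonal entries, and suppose −iJ = C·R·Dᴴ. Define the 2m×2m matrix X = (1/√2)·fromBlocks 1 (i·1) 1 (−i·1) (blocks are scalar multiples of the m×m identity) and V = (fromBlocks C 0 0 (conj D))·X. Then V is unitary and −i·(fromBlocks 0 J Jᵀ 0) = V·(fromBlocks R 0 0 R)·Vᵀ. In particular this is a Takagi factorization of the squeezing matrix of twin beams in which the diagonal matrix fromBlocks R 0 0 R contains each singular value of −iJ exactly twice. -/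
/-!
Put `B = fromBlocks C 0 0 (conj D)`. Since `(conj D)ᵀ = Dᴴ` and the diagonal `R` is symmetric,
`−i·fromBlocks 0 J Jᵀ 0 = B·fromBlocks 0 R R 0·Bᵀ`. The unitary `X` turns `fromBlocks R 0 0 R`
into `fromBlocks 0 R R 0` under `M ↦ X·M·Xᵀ` (the factors `±i` cancel on the diagonal blocks and
add up off the diagonal), so `V = B·X` is a Takagi factorization.
-/

open Matrix

namespace Matrix

theorem fromBlocks_mem_unitaryGroup {l n α : Type*} [Fintype l] [DecidableEq l] [Fintype n]
    [DecidableEq n] [CommRing α] [StarRing α] {A : Matrix l l α} {D : Matrix n n α}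
    (hA : A ∈ unitaryGroup l α) (hD : D ∈ unitaryGroup n α) :
    fromBlocks A 0 0 D ∈ unitaryGroup (l ⊕ n) α := by
  rw [mem_unitaryGroup_iff, star_eq_conjTranspose] at hA hD ⊢
  simp [fromBlocks_conjTranspose, fromBlocks_multiply, hA, hD, fromBlocks_one]

theorem fromBlocks_zero_transpose_zero_eq {k l n α : Type*} [Fintype k] [CommSemiring α]
    {S : Matrix l n α} {A : Matrix l k α} {R : Matrix k k α} {D : Matrix n k α}
    (hR : Rᵀ = R) (hS : S = A * R * Dᵀ) :
    fromBlocks 0 S Sᵀ 0 = fromBlocks A 0 0 D * fromBlocks 0 R R 0 * (fromBlocks A 0 0 D)ᵀ := by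
  simp [hS, hR, fromBlocks_transpose, fromBlocks_multiply, transpose_mul, Matrix.mul_assoc]

end Matrix

open Complex

theorem one_div_sqrt_two_mul_self : ((1 : ℂ) / Real.sqrt 2) * ((1 : ℂ) / Real.sqrt 2) = 1 / 2 := by
  rw [div_mul_div_comm, one_mul, ← ofReal_mul, Real.mul_self_sqrt zero_le_two]
  norm_num

noncomputable def beamSplitter (n : Type*) [DecidableEq n] : Matrix (n ⊕ n) (n ⊕ n) ℂ :=
  ((1 : ℂ) / Real.sqrt 2) • fromBlocks 1 (I • 1) 1 ((-I) • 1)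

variable {n : Type*} [Fintype n] [DecidableEq n]

theorem beamSplitter_mem_unitaryGroup : beamSplitter n ∈ unitaryGroup (n ⊕ n) ℂ := by
  rw [mem_unitaryGroup_iff, star_eq_conjTranspose, beamSplitter, conjTranspose_smul,
    fromBlocks_conjTranspose, smul_mul_smul_comm,
    show star ((1 : ℂ) / Real.sqrt 2) = 1 / Real.sqrt 2 by simp, one_div_sqrt_two_mul_self,
    fromBlocks_multiply]
  simp [smul_smul, fromBlocks_smul, ← two_smul ℂ, fromBlocks_one]

theorem beamSplitter_mul_fromBlocks_mul_transpose (R : Matrix n n ℂ) :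
    beamSplitter n * fromBlocks R 0 0 R * (beamSplitter n)ᵀ = fromBlocks 0 R R 0 := by
  rw [beamSplitter, transpose_smul, smul_mul, smul_mul_smul_comm, one_div_sqrt_two_mul_self,
    fromBlocks_transpose, fromBlocks_multiply, fromBlocks_multiply]
  simp [smul_smul, fromBlocks_smul, ← two_smul ℂ]

theorem twin_beam_takagi_factorization_general (m : ℕ)
    (J C D : Matrix (Fin m) (Fin m) ℂ)
    (hC : C ∈ Matrix.unitaryGroup (Fin m) ℂ)
    (hD : D ∈ Matrix.unitaryGroup (Fin m) ℂ)
    (r : Fin m → ℝ)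
    (R : Matrix (Fin m) (Fin m) ℂ)
    (hR : R = Matrix.diagonal fun i => (r i : ℂ))
    (hSVD : (-Complex.I) • J = C * R * Dᴴ)
    (X V : Matrix (Fin m ⊕ Fin m) (Fin m ⊕ Fin m) ℂ)
    (hX : X = ((1 : ℂ) / Real.sqrt 2) •
      Matrix.fromBlocks 1 (Complex.I • 1) 1 ((-Complex.I) • 1))
    (hV : V = (Matrix.fromBlocks C 0 0 (D.map (starRingEnd ℂ))) * X) :
    V ∈ Matrix.unitaryGroup (Fin m ⊕ Fin m) ℂ ∧
    (-Complex.I) • Matrix.fromBlocks 0 J Jᵀ 0 =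
      V * (Matrix.fromBlocks R 0 0 R) * Vᵀ := by
  obtain rfl : X = beamSplitter (Fin m) := hX
  set B := fromBlocks C 0 0 (D.map (starRingEnd ℂ))
  subst hV
  refine ⟨mul_mem (fromBlocks_mem_unitaryGroup hC (map_star_mem_unitaryGroup_iff.2 hD))
    beamSplitter_mem_unitaryGroup, ?_⟩
  have hRT : Rᵀ = R := by rw [hR, diagonal_transpose]
  calc (-I) • fromBlocks 0 J Jᵀ 0 = fromBlocks 0 ((-I) • J) ((-I) • J)ᵀ 0 := by
        rw [fromBlocks_smul, smul_zero, transpose_smul]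
    _ = B * fromBlocks 0 R R 0 * Bᵀ := fromBlocks_zero_transpose_zero_eq hRT hSVD
    _ = B * (beamSplitter _ * fromBlocks R 0 0 R * (beamSplitter _)ᵀ) * Bᵀ := by
        rw [beamSplitter_mul_fromBlocks_mul_transpose]
    _ = B * beamSplitter _ * fromBlocks R 0 0 R * (B * beamSplitter _)ᵀ := by
        simp only [transpose_mul, Matrix.mul_assoc]

/-- Takagi factorization of the squeezing matrix of twin beams: with `−iJ = C·R·Dᴴ` an SVD,
`X = (1/√2)·fromBlocks 1 (i·1) 1 (−i·1)` and `V = (fromBlocks C 0 0 (conj D))·X`, the matrix `V`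
is unitary and `−i·(fromBlocks 0 J Jᵀ 0) = V·(fromBlocks R 0 0 R)·Vᵀ`, the diagonal matrix
`fromBlocks R 0 0 R` containing each singular value of `−iJ` exactly twice. -/
theorem twin_beam_takagi_factorization (m : ℕ)
    (J C D : Matrix (Fin m) (Fin m) ℂ)
    (hC : C ∈ Matrix.unitaryGroup (Fin m) ℂ)
    (hD : D ∈ Matrix.unitaryGroup (Fin m) ℂ)
    (r : Fin m → ℝ) (hr : ∀ i, 0 ≤ r i)
    (R : Matrix (Fin m) (Fin m) ℂ)
    (hR : R = Matrix.diagonal fun i => (r i : ℂ))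
    (hSVD : (-Complex.I) • J = C * R * Dᴴ)
    (X V : Matrix (Fin m ⊕ Fin m) (Fin m ⊕ Fin m) ℂ)
    (hX : X = ((1 : ℂ) / Real.sqrt 2) •
      Matrix.fromBlocks 1 (Complex.I • 1) 1 ((-Complex.I) • 1))
    (hV : V = (Matrix.fromBlocks C 0 0 (D.map (starRingEnd ℂ))) * X) :
    V ∈ Matrix.unitaryGroup (Fin m ⊕ Fin m) ℂ ∧
    (-Complex.I) • Matrix.fromBlocks 0 J Jᵀ 0 =
      V * (Matrix.fromBlocks R 0 0 R) * Vᵀ :=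
  twin_beam_takagi_factorization_general m J C D hC hD r R hR hSVD X V hX hV
end

section
/- Let η and ξ be real numbers with |η| < 1, and set K(x,y) = (1/√π)·exp(−(x²+y²)/(2w) + ((η+iξ)/w)·x·y). Then for every real x and every complex t, the integral ∫_{ℝ} K(x,y)·exp(2·y·t − t² − y²/2 − i·ζ·y²) dy converges and equals p_c·exp(−x²/2 + i·ζ·x²)·exp(2·q_c·x·t − q_c²·t²). -/
/-! As a function of `y` the integrand is `exp (b y² + c y + d) / √π` with
`b = -D / (2w)`, `D = 1 + w + iηξ`, and `Re b = -(1 + w) / (2w) < 0`, so the complex Gaussian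
integral applies and gives `(2w / D)^(1/2) · exp (d - c² / (4b))`. Completing the square is
governed by the identity `D (D - 2w) = (η + iξ)²`, a restatement of `w² = (1 + ξ²)(1 - η²)`. -/

open Complex MeasureTheory

theorem Complex.ofReal_mul_cpow {r : ℝ} (hr : 0 < r) (z s : ℂ) :
    ((r : ℂ) * z) ^ s = (r : ℂ) ^ s * z ^ s := by
  have hr' : (r : ℂ) ≠ 0 := ofReal_ne_zero.mpr hr.ne'
  rcases eq_or_ne z 0 with rfl | hz
  · rcases eq_or_ne s 0 with rfl | hs <;> simp [*, zero_cpow]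
  · rw [cpow_def_of_ne_zero (mul_ne_zero hr' hz), cpow_def_of_ne_zero hr', cpow_def_of_ne_zero hz,
      log_ofReal_mul hr hz, ← exp_add, ofReal_log hr.le, add_mul]

theorem integral_cexp_quadratic_div_sqrt_pi {b : ℂ} (hb : b.re < 0) (c d : ℂ) :
    ∫ y : ℝ, cexp (b * y ^ 2 + c * y + d) / √Real.pi =
      (1 / -b) ^ (1 / 2 : ℂ) * cexp (d - c ^ 2 / (4 * b)) := by
  have hsqrt : ((√Real.pi : ℝ) : ℂ) = (Real.pi : ℂ) ^ (1 / 2 : ℂ) := by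
    rw [Real.sqrt_eq_rpow, ofReal_cpow Real.pi_pos.le]; norm_num
  have hsqrt0 : ((√Real.pi : ℝ) : ℂ) ≠ 0 := ofReal_ne_zero.mpr (Real.sqrt_pos.mpr Real.pi_pos).ne'
  rw [integral_div, integral_cexp_quadratic hb, div_eq_mul_one_div (Real.pi : ℂ),
    Complex.ofReal_mul_cpow Real.pi_pos, ← hsqrt]
  field_simp

theorem mehler_numerator_sq_eq {η ξ w : ℝ} (hw : w ^ 2 = (1 + ξ ^ 2) * (1 - η ^ 2)) :
    ((η : ℂ) + ξ * I) ^ 2 = (1 + w + η * ξ * I) * (1 + w + η * ξ * I - 2 * w) := by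
  have hw' : (w : ℂ) ^ 2 = (1 + ξ ^ 2) * (1 - η ^ 2) := by exact_mod_cast congrArg ofReal hw
  linear_combination hw' + (ξ ^ 2 * (1 - η ^ 2) : ℂ) * I_sq

-- With `q = a / D`, the hypothesis is `1 - 2w / D = q²`, which produces the `-q² t²` term.
theorem mehler_exponent_completed_square {a D w x t : ℂ} (hD : D ≠ 0) (hw : w ≠ 0)
    (h : a ^ 2 = D * (D - 2 * w)) :
    (-x ^ 2 / (2 * w) - t ^ 2) - (a / w * x + 2 * t) ^ 2 / (4 * (-D / (2 * w))) =
      -x ^ 2 / 2 + (D - 1 - w) / (2 * w) * x ^ 2 + (2 * (a / D) * x * t - (a / D) ^ 2 * t ^ 2) := by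
  field_simp
  linear_combination (4 * D * x ^ 2 + 8 * w * t ^ 2) * h

/-- The generating-function Gaussian integral used to prove the complex Mehler formula:
for the kernel `K(x,y) = (1/√π)·exp(−(x²+y²)/(2w) + ((η+iξ)/w)xy)`, the integral
`∫ K(x,y)·exp(2yt − t² − y²/2 − iζy²) dy` converges and equals
`p_c·exp(−x²/2 + iζx²)·exp(2q_c·x·t − q_c²·t²)`. -/
theorem complex_mehler_generating_integral (η ξ : ℝ) (hη : |η| < 1)
    (w : ℝ) (hw : w = Real.sqrt ((1 + ξ ^ 2) * (1 - η ^ 2)))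
    (ζ : ℝ) (hζ : ζ = η * ξ / (2 * w))
    (qc : ℂ) (hqc : qc = ((η : ℂ) + (ξ : ℂ) * Complex.I) /
      (1 + (w : ℂ) + (η : ℂ) * (ξ : ℂ) * Complex.I))
    (pc : ℂ) (hpc : pc = (2 * (w : ℂ) /
      (1 + (w : ℂ) + (η : ℂ) * (ξ : ℂ) * Complex.I)) ^ ((1 : ℂ) / 2))
    (K : ℝ → ℝ → ℂ)
    (hK : ∀ x y : ℝ, K x y = ((1 : ℂ) / Real.sqrt Real.pi) *
      Complex.exp (-((x : ℂ) ^ 2 + (y : ℂ) ^ 2) / (2 * (w : ℂ)) +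
        (((η : ℂ) + (ξ : ℂ) * Complex.I) / (w : ℂ)) * (x : ℂ) * (y : ℂ)))
    (x : ℝ) (t : ℂ) :
    MeasureTheory.Integrable
      (fun y : ℝ => K x y *
        Complex.exp (2 * (y : ℂ) * t - t ^ 2 - (y : ℂ) ^ 2 / 2 -
          Complex.I * (ζ : ℂ) * (y : ℂ) ^ 2)) ∧
    ∫ y : ℝ, K x y *
        Complex.exp (2 * (y : ℂ) * t - t ^ 2 - (y : ℂ) ^ 2 / 2 -
          Complex.I * (ζ : ℂ) * (y : ℂ) ^ 2) =
      pc * Complex.exp (-(x : ℂ) ^ 2 / 2 + Complex.I * (ζ : ℂ) * (x : ℂ) ^ 2) *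
        Complex.exp (2 * qc * (x : ℂ) * t - qc ^ 2 * t ^ 2) := by
  have hprod : 0 < (1 + ξ ^ 2) * (1 - η ^ 2) :=
    mul_pos (by positivity) (sub_pos.mpr ((sq_lt_one_iff_abs_lt_one η).mpr hη))
  have hw0 : 0 < w := hw ▸ Real.sqrt_pos.mpr hprod
  have hw' : (w : ℂ) ≠ 0 := ofReal_ne_zero.mpr hw0.ne'
  set a : ℂ := η + ξ * I
  set D : ℂ := 1 + w + η * ξ * I
  have hDre : D.re = 1 + w := by simp [D]
  have hD : D ≠ 0 := fun h => by rw [h, zero_re] at hDre; linarith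
  have hb : (-D / (2 * w)).re < 0 := by
    rw [show (2 * w : ℂ) = ((2 * w : ℝ) : ℂ) by push_cast; rfl, div_ofReal_re, neg_re, hDre]
    exact div_neg_of_neg_of_pos (by linarith) (by linarith)
  have hintegrand : ∀ y : ℝ, K x y * cexp (2 * y * t - t ^ 2 - y ^ 2 / 2 - I * ζ * y ^ 2) =
      cexp (-D / (2 * w) * y ^ 2 + (a / w * x + 2 * t) * y + (-x ^ 2 / (2 * w) - t ^ 2)) /
        √Real.pi := by
    intro y
    rw [hK, ← mul_div_right_comm, one_mul, div_mul_eq_mul_div, ← exp_add, hζ]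
    congr 2
    push_cast
    field_simp
    ring
  simp only [hintegrand]
  refine ⟨(integrable_cexp_quadratic' hb _ _).div_const _, ?_⟩
  rw [integral_cexp_quadratic_div_sqrt_pi hb, mehler_exponent_completed_square hD hw'
    (mehler_numerator_sq_eq (hw ▸ Real.sq_sqrt hprod.le)), exp_add, hpc, hqc, hζ,
    show 1 / -(-D / (2 * w)) = 2 * w / D by field_simp,
    show (D - 1 - w) / (2 * w) = I * ((η * ξ / (2 * w) : ℝ) : ℂ) by push_cast; ring, ← mul_assoc]
end

section
/- Let η and ξ be real numbers with |η| < 1. Then the squared modulus of q_c equals (1 + ξ² − w)/(1 + ξ² + w), i.e. |q_c|² = (η² + ξ²)/((1+w)² + η²ξ²) = (1 + ξ² − w)/(1 + ξ² + w), and in particular |q_c| < 1. Writing q₀ = w/(1+ξ²) = Real.sqrt((1−η²)/(1+ξ²)), this says |q_c|² = (1−q₀)/(1+q₀). -/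
open Complex

/-!
Clearing denominators with `1 + ξ²` and using `w² = (1 + ξ²)(1 - η²)`, the numerator
`η² + ξ²` of `|q_c|²` becomes `(1 + ξ² - w)(1 + ξ² + w)` and the denominator
`(1 + w)² + η²ξ²` becomes the square `(1 + ξ² + w)²`; one factor `1 + ξ² + w` cancels.
Since `w > 0` when `|η| < 1`, the resulting quotient is below `1`.
-/

theorem Complex.sq_norm_add_mul_I_div (a b c d : ℝ) :
    ‖((a : ℂ) + b * I) / (c + d * I)‖ ^ 2 = (a ^ 2 + b ^ 2) / (c ^ 2 + d ^ 2) := by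
  rw [norm_div, div_pow, Complex.sq_norm, Complex.sq_norm, normSq_add_mul_I, normSq_add_mul_I]

theorem Real.sqrt_mul_div_self {a : ℝ} (ha : 0 < a) (b : ℝ) :
    √(a * b) / a = √(b / a) := by
  have hsa : 0 < √a := Real.sqrt_pos.2 ha
  rw [Real.sqrt_mul ha.le, Real.sqrt_div' b ha.le]
  field_simp
  rw [Real.sq_sqrt ha.le, mul_comm]

section

variable {η ξ w : ℝ} (hw : w ^ 2 = (1 + ξ ^ 2) * (1 - η ^ 2))
include hw

theorem mul_sq_add_sq_eq_of_sq_eq :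
    (1 + ξ ^ 2) * (η ^ 2 + ξ ^ 2) = (1 + ξ ^ 2 - w) * (1 + ξ ^ 2 + w) := by
  linear_combination hw

theorem mul_one_add_sq_add_sq_mul_sq_eq_of_sq_eq :
    (1 + ξ ^ 2) * ((1 + w) ^ 2 + η ^ 2 * ξ ^ 2) = (1 + ξ ^ 2 + w) ^ 2 := by
  linear_combination ξ ^ 2 * hw

theorem sq_add_sq_div_eq_of_sq_eq (hw0 : 0 ≤ w) :
    (η ^ 2 + ξ ^ 2) / ((1 + w) ^ 2 + η ^ 2 * ξ ^ 2) = (1 + ξ ^ 2 - w) / (1 + ξ ^ 2 + w) := by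
  have hA : 0 < 1 + ξ ^ 2 := by positivity
  have hAw : 0 < 1 + ξ ^ 2 + w := by positivity
  calc (η ^ 2 + ξ ^ 2) / ((1 + w) ^ 2 + η ^ 2 * ξ ^ 2)
      = (1 + ξ ^ 2) * (η ^ 2 + ξ ^ 2) / ((1 + ξ ^ 2) * ((1 + w) ^ 2 + η ^ 2 * ξ ^ 2)) :=
        (mul_div_mul_left _ _ hA.ne').symm
    _ = (1 + ξ ^ 2 - w) * (1 + ξ ^ 2 + w) / (1 + ξ ^ 2 + w) ^ 2 := by
        rw [mul_sq_add_sq_eq_of_sq_eq hw, mul_one_add_sq_add_sq_mul_sq_eq_of_sq_eq hw]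
    _ = (1 + ξ ^ 2 - w) / (1 + ξ ^ 2 + w) := by
        rw [sq (1 + ξ ^ 2 + w), mul_div_mul_right _ _ hAw.ne']

end

/-- Squared modulus of `q_c = (η+iξ)/(1+w+iηξ)`:
`|q_c|² = (η²+ξ²)/((1+w)²+η²ξ²) = (1+ξ²−w)/(1+ξ²+w) = (1−q₀)/(1+q₀)` with
`q₀ = w/(1+ξ²) = √((1−η²)/(1+ξ²))`, and in particular `|q_c| < 1`. -/
theorem complex_mehler_qc_modulus (η ξ : ℝ) (hη : |η| < 1)
    (w : ℝ) (hw : w = Real.sqrt ((1 + ξ ^ 2) * (1 - η ^ 2)))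
    (qc : ℂ) (hqc : qc = ((η : ℂ) + (ξ : ℂ) * Complex.I) /
      (1 + (w : ℂ) + (η : ℂ) * (ξ : ℂ) * Complex.I))
    (q₀ : ℝ) (hq₀ : q₀ = w / (1 + ξ ^ 2)) :
    ‖qc‖ ^ 2 = (η ^ 2 + ξ ^ 2) / ((1 + w) ^ 2 + η ^ 2 * ξ ^ 2) ∧
    ‖qc‖ ^ 2 = (1 + ξ ^ 2 - w) / (1 + ξ ^ 2 + w) ∧
    ‖qc‖ < 1 ∧
    q₀ = Real.sqrt ((1 - η ^ 2) / (1 + ξ ^ 2)) ∧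
    ‖qc‖ ^ 2 = (1 - q₀) / (1 + q₀) := by
  have hA : 0 < 1 + ξ ^ 2 := by positivity
  have hη' : 0 < 1 - η ^ 2 := by nlinarith [sq_abs η, abs_nonneg η]
  have hw_pos : 0 < w := hw ▸ Real.sqrt_pos.2 (mul_pos hA hη')
  have hw_sq : w ^ 2 = (1 + ξ ^ 2) * (1 - η ^ 2) := by
    rw [hw, Real.sq_sqrt (mul_pos hA hη').le]
  have h₁ : ‖qc‖ ^ 2 = (η ^ 2 + ξ ^ 2) / ((1 + w) ^ 2 + η ^ 2 * ξ ^ 2) := by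
    have hqc' : qc = ((η : ℂ) + ξ * I) / (((1 + w : ℝ) : ℂ) + ((η * ξ : ℝ) : ℂ) * I) := by
      push_cast; rw [hqc, mul_assoc]
    rw [hqc', sq_norm_add_mul_I_div]
    ring
  have h₂ := h₁.trans (sq_add_sq_div_eq_of_sq_eq hw_sq hw_pos.le)
  have h₃ : ‖qc‖ < 1 := by
    rw [← sq_lt_one_iff₀ (norm_nonneg qc), h₂, div_lt_one (by positivity)]
    linarith
  have h₄ : q₀ = √((1 - η ^ 2) / (1 + ξ ^ 2)) := by
    rw [hq₀, hw, Real.sqrt_mul_div_self hA]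
  refine ⟨h₁, h₂, h₃, h₄, ?_⟩
  rw [h₂, hq₀]
  field_simp
end

section
/- Let R be an n×n complex matrix. Then the matrix exponential of the 2n×2n block matrix fromBlocks 0 R R 0 equals fromBlocks (cosh R) (sinh R) (sinh R) (cosh R), where cosh R = (exp R + exp(−R))/2 and sinh R = (exp R − exp(−R))/2 are defined via the matrix exponential. -/
/-!
The map `(A, B) ↦ ½ [[A + B, A - B], [A - B, A + B]]`, i.e. conjugation of `diag(A, B)` by
`[[1, 1], [1, -1]]`, is a continuous ring homomorphism `Mₙ × Mₙ → M₂ₙ` sending `(R, -R)` to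
`fromBlocks 0 R R 0`. Continuous ring homomorphisms commute with `exp`, and `exp` on a product
acts componentwise, so `exp (fromBlocks 0 R R 0)` is the image of `(exp R, exp (-R))`.
-/

open Matrix NormedSpace

namespace Matrix

variable {n 𝕜 : Type*} [Fintype n] [DecidableEq n]

@[simps]
def fromBlocksSumDiffRingHom [Field 𝕜] [CharZero 𝕜] :
    Matrix n n 𝕜 × Matrix n n 𝕜 →+* Matrix (n ⊕ n) (n ⊕ n) 𝕜 where
  toFun p := fromBlocks ((2 : 𝕜)⁻¹ • (p.1 + p.2)) ((2 : 𝕜)⁻¹ • (p.1 - p.2))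
    ((2 : 𝕜)⁻¹ • (p.1 - p.2)) ((2 : 𝕜)⁻¹ • (p.1 + p.2))
  map_one' := by
    rw [← fromBlocks_one]
    congr 1 <;> simp only [Prod.fst_one, Prod.snd_one] <;> module
  map_mul' p q := by
    simp only [fromBlocks_multiply, Prod.fst_mul, Prod.snd_mul, Matrix.smul_mul, Matrix.mul_smul,
      add_mul, mul_add, sub_mul, mul_sub]
    congr 1 <;> module
  map_zero' := by simp
  map_add' p q := by
    simp only [fromBlocks_add, Prod.fst_add, Prod.snd_add]
    congr 1 <;> module

theorem fromBlocksSumDiffRingHom_mk_neg [Field 𝕜] [CharZero 𝕜] (A : Matrix n n 𝕜) :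
    fromBlocksSumDiffRingHom (A, -A) = fromBlocks 0 A A 0 := by
  rw [fromBlocksSumDiffRingHom_apply]
  congr 1 <;> module

theorem continuous_fromBlocksSumDiffRingHom [Field 𝕜] [CharZero 𝕜] [TopologicalSpace 𝕜]
    [IsTopologicalRing 𝕜] :
    Continuous (fromBlocksSumDiffRingHom : Matrix n n 𝕜 × Matrix n n 𝕜 → _) :=
  Continuous.matrix_fromBlocks (by fun_prop) (by fun_prop) (by fun_prop) (by fun_prop)

theorem exp_fromBlocksSumDiffRingHom [RCLike 𝕜] (A B : Matrix n n 𝕜) :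
    exp (fromBlocksSumDiffRingHom (A, B)) = fromBlocksSumDiffRingHom (exp A, exp B) := by
  open scoped Norms.Operator in
  calc exp (fromBlocksSumDiffRingHom (A, B))
      = fromBlocksSumDiffRingHom (exp (A, B)) :=
        -- instance search finds only the `CompleteSpace` of the entrywise uniformity,
        -- which does not unify with the operator-norm one
        (@map_exp _ _ _ _ (FiniteDimensional.complete 𝕜 _) _ _ _ _ _ _
          continuous_fromBlocksSumDiffRingHom _).symm
    _ = fromBlocksSumDiffRingHom (exp A, exp B) :=
        congrArg _ (Prod.ext (Prod.fst_exp _) (Prod.snd_exp _))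

end Matrix

/-- The symplectic matrix of the mode-wise squeezing transformation:
`exp (fromBlocks 0 R R 0) = fromBlocks (cosh R) (sinh R) (sinh R) (cosh R)` where
`cosh R = (exp R + exp(−R))/2` and `sinh R = (exp R − exp(−R))/2` via the matrix exponential. -/
theorem exp_fromBlocks_squeezing (n : ℕ) (R : Matrix (Fin n) (Fin n) ℂ) :
    NormedSpace.exp (Matrix.fromBlocks 0 R R 0) =
      Matrix.fromBlocks
        (((2 : ℂ)⁻¹) • (NormedSpace.exp R + NormedSpace.exp (-R)))
        (((2 : ℂ)⁻¹) • (NormedSpace.exp R - NormedSpace.exp (-R)))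
        (((2 : ℂ)⁻¹) • (NormedSpace.exp R - NormedSpace.exp (-R)))
        (((2 : ℂ)⁻¹) • (NormedSpace.exp R + NormedSpace.exp (-R))) := by
  rw [← fromBlocksSumDiffRingHom_mk_neg, exp_fromBlocksSumDiffRingHom,
    fromBlocksSumDiffRingHom_apply]
end

section
/- Let η and ξ be real numbers with |η| < 1. Then |p_c|² = 2w·√(1+ξ²)/(1 + ξ² + w); equivalently, (1 + ξ² + w)² = (1 + ξ²)·((1 + w)² + η²ξ²), and hence |p_c|² = (1 − |q_c|²)·√(1+ξ²), i.e. |p_c| = p·(1+ξ²)^{1/4} where p = √(1 − |q_c|²). -/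
open Complex

/-!
Since `w² = (1 + ξ²)(1 - η²)`, the modulus of the denominator `D = 1 + w + iηξ` satisfies
`√(1 + ξ²) · |D| = 1 + ξ² + w`: squared, this is `(1 + ξ²)((1 + w)² + η²ξ²) = (1 + ξ² + w)²`, which
after expanding reduces to `ξ² (w² - (1 + ξ²)(1 - η²)) = 0`. Hence `|p_c|² = 2w / |D|` and
`1 - |q_c|² = 2w / (1 + ξ² + w)` differ exactly by the factor `√(1 + ξ²)`.
-/

lemma Complex.norm_cpow_one_half_sq (z : ℂ) : ‖z ^ ((1 : ℂ) / 2)‖ ^ 2 = ‖z‖ := by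
  have h : (1 : ℂ) / 2 = ((1 / 2 : ℝ) : ℂ) := by push_cast; ring
  rw [h, norm_cpow_real, ← Real.sqrt_eq_rpow, Real.sq_sqrt (norm_nonneg z)]

lemma Real.sqrt_sqrt_eq_rpow_one_fourth {x : ℝ} (hx : 0 ≤ x) : √(√x) = x ^ ((1 : ℝ) / 4) := by
  rw [Real.sqrt_eq_rpow, Real.sqrt_eq_rpow, ← Real.rpow_mul hx]
  norm_num

namespace ComplexMehler

lemma denom_eq_ofReal_add_ofReal_mul_I (η ξ w : ℝ) :
    (1 + w + η * ξ * I : ℂ) = ((1 + w : ℝ) : ℂ) + ((η * ξ : ℝ) : ℂ) * I := by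
  push_cast
  ring

variable {η ξ w : ℝ} (hw : w ^ 2 = (1 + ξ ^ 2) * (1 - η ^ 2))
include hw

lemma sq_one_add_sq_add_eq :
    (1 + ξ ^ 2 + w) ^ 2 = (1 + ξ ^ 2) * ((1 + w) ^ 2 + η ^ 2 * ξ ^ 2) := by
  linear_combination -ξ ^ 2 * hw

lemma sqrt_mul_norm_denom (hw0 : 0 ≤ w) :
    √(1 + ξ ^ 2) * ‖(1 + w + η * ξ * I : ℂ)‖ = 1 + ξ ^ 2 + w := by
  rw [denom_eq_ofReal_add_ofReal_mul_I, norm_add_mul_I, ← Real.sqrt_mul (by positivity), mul_pow,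
    ← sq_one_add_sq_add_eq hw, Real.sqrt_sq (by positivity)]

lemma one_sub_norm_div_denom_sq (hw0 : 0 ≤ w) :
    1 - ‖(η + ξ * I : ℂ) / (1 + w + η * ξ * I)‖ ^ 2 = 2 * w / (1 + ξ ^ 2 + w) := by
  have hN : 0 < (1 + w) ^ 2 + (η * ξ) ^ 2 := by positivity
  rw [denom_eq_ofReal_add_ofReal_mul_I, norm_div, div_pow, norm_add_mul_I, norm_add_mul_I,
    Real.sq_sqrt (by positivity), Real.sq_sqrt hN.le]
  field_simp
  linear_combination (ξ ^ 2 - 1 - w) * hw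

end ComplexMehler

/-- Modulus of `p_c`, the principal square root of `2w/(1+w+iηξ)`:
`|p_c|² = 2w√(1+ξ²)/(1+ξ²+w)`, equivalently `(1+ξ²+w)² = (1+ξ²)((1+w)²+η²ξ²)`, and hence
`|p_c|² = (1−|q_c|²)·√(1+ξ²)`, i.e. `|p_c| = p·(1+ξ²)^{1/4}` with `p = √(1−|q_c|²)`. -/
theorem complex_mehler_pc_modulus (η ξ : ℝ) (hη : |η| < 1)
    (w : ℝ) (hw : w = Real.sqrt ((1 + ξ ^ 2) * (1 - η ^ 2)))
    (qc : ℂ) (hqc : qc = ((η : ℂ) + (ξ : ℂ) * Complex.I) /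
      (1 + (w : ℂ) + (η : ℂ) * (ξ : ℂ) * Complex.I))
    (pc : ℂ) (hpc : pc = (2 * (w : ℂ) /
      (1 + (w : ℂ) + (η : ℂ) * (ξ : ℂ) * Complex.I)) ^ ((1 : ℂ) / 2)) :
    ‖pc‖ ^ 2 = 2 * w * Real.sqrt (1 + ξ ^ 2) / (1 + ξ ^ 2 + w) ∧
    (1 + ξ ^ 2 + w) ^ 2 = (1 + ξ ^ 2) * ((1 + w) ^ 2 + η ^ 2 * ξ ^ 2) ∧
    ‖pc‖ ^ 2 = (1 - ‖qc‖ ^ 2) * Real.sqrt (1 + ξ ^ 2) ∧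
    ‖pc‖ = Real.sqrt (1 - ‖qc‖ ^ 2) * (1 + ξ ^ 2) ^ ((1 : ℝ) / 4) := by
  have hw0 : 0 ≤ w := hw ▸ Real.sqrt_nonneg _
  have hw2 : w ^ 2 = (1 + ξ ^ 2) * (1 - η ^ 2) := by
    have hη2 : η ^ 2 < 1 := (sq_lt_one_iff_abs_lt_one η).2 hη
    rw [hw, Real.sq_sqrt (mul_nonneg (by positivity) (by linarith))]
  have hs : 0 < √(1 + ξ ^ 2) := by positivity
  have hpc_sq : ‖pc‖ ^ 2 = 2 * w * √(1 + ξ ^ 2) / (1 + ξ ^ 2 + w) := by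
    rw [hpc, norm_cpow_one_half_sq, norm_div, ← ComplexMehler.sqrt_mul_norm_denom hw2 hw0]
    simp only [norm_mul, Complex.norm_ofNat, norm_real, Real.norm_of_nonneg hw0]
    field_simp
  have hpq : ‖pc‖ ^ 2 = (1 - ‖qc‖ ^ 2) * √(1 + ξ ^ 2) := by
    rw [hpc_sq, hqc, ComplexMehler.one_sub_norm_div_denom_sq hw2 hw0]
    ring
  refine ⟨hpc_sq, ComplexMehler.sq_one_add_sq_add_eq hw2, hpq, ?_⟩
  rw [← Real.sqrt_sq (norm_nonneg pc), hpq, Real.sqrt_mul' _ hs.le,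
    Real.sqrt_sqrt_eq_rpow_one_fourth (by positivity)]
end
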